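/- Assume in addition that M is a Noetherian R-module. Let U be an R-submodule of M with D(U) ⊆ U, let α ∈ M, and for each integer n ≥ 0 let N_n denote the submodule of M generated by U together with D^[0](α), D^[1](α), …, D^[n](α). Then there exists an n ≥ 0 such that D(N_n) ⊆ N_n, and for such an n the submodule N_n is the smallest R-submodule N of M satisfying U ⊆ N, α ∈ N and D(N) ⊆ N. -/

import Mathlib

/-! The submodules `N n` form an increasing chain with `D (N n) ⊆ N (n + 1)`, since the Leibniz
rule shows that `D` maps the span of a set `s ⊆ P` into `P` as soon as it maps `s` into `P`.
By noetherianity the chain becomes stationary, and at a stationary index `N n` is `D`-stable.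
Conversely every `D`-stable submodule containing `U` and `α` contains all `D^[i] α`. -/

open Set Submodule

section

variable {R M : Type*} [Semiring R] [AddCommGroup M] [Module R M] {δ : R → R} {D : M → M}

theorem mapsTo_span_of_leibniz (hDadd : ∀ m n : M, D (m + n) = D m + D n)
    (hDsmul : ∀ (r : R) (m : M), D (r • m) = δ r • m + r • D m)
    {s : Set M} {P : Submodule R M} (hsP : s ⊆ P) (hDs : MapsTo D s P) :
    MapsTo D (span R s) P := by
  intro x hx
  induction hx using span_induction with
  | mem y hy => exact hDs hy
  | zero =>
    rw [show D 0 = 0 from map_zero (AddMonoidHom.mk' D hDadd)]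
    exact zero_mem P
  | add y z _ _ hy hz => rw [hDadd]; exact add_mem hy hz
  | smul r y hy ihy =>
    rw [hDsmul]
    exact add_mem (smul_mem _ _ (span_le.2 hsP hy)) (smul_mem _ _ ihy)

def iterateSpan (U : Submodule R M) (D : M → M) (α : M) (n : ℕ) : Submodule R M :=
  U ⊔ span R ((fun i => D^[i] α) '' Iic n)

variable {U : Submodule R M} {α : M}

theorem iterateSpan_mono : Monotone (iterateSpan U D α) := fun _ _ hmn =>
  sup_le_sup_left (span_mono (image_mono (Iic_subset_Iic.2 hmn))) _

theorem iterateSpan_le {N' : Submodule R M} (hU : U ≤ N') (hα : α ∈ N') (hD : MapsTo D N' N')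
    (n : ℕ) : iterateSpan U D α n ≤ N' := by
  refine sup_le hU (span_le.2 ?_)
  rintro _ ⟨i, -, rfl⟩
  exact hD.iterate i hα

theorem mapsTo_iterateSpan_succ (hDadd : ∀ m n : M, D (m + n) = D m + D n)
    (hDsmul : ∀ (r : R) (m : M), D (r • m) = δ r • m + r • D m) (hU : MapsTo D U U) (n : ℕ) :
    MapsTo D (iterateSpan U D α n) (iterateSpan U D α (n + 1)) := by
  have hspan : iterateSpan U D α n = span R (U ∪ (fun i => D^[i] α) '' Iic n) := by
    rw [span_union, span_eq, iterateSpan]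
  rw [hspan]
  refine mapsTo_span_of_leibniz hDadd hDsmul ?_ ?_
  · exact fun x hx => iterateSpan_mono n.le_succ (hspan ▸ subset_span hx)
  · rintro _ (hx | ⟨i, hi, rfl⟩)
    · exact mem_sup_left (hU hx)
    · rw [← Function.iterate_succ_apply' D i α]
      exact mem_sup_right (subset_span ⟨i + 1, Nat.succ_le_succ hi, rfl⟩)

theorem exists_mapsTo_iterateSpan [IsNoetherian R M] (hDadd : ∀ m n : M, D (m + n) = D m + D n)
    (hDsmul : ∀ (r : R) (m : M), D (r • m) = δ r • m + r • D m) (hU : MapsTo D U U) :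
    ∃ n, MapsTo D (iterateSpan U D α n) (iterateSpan U D α n) := by
  obtain ⟨n, hn⟩ :=
    monotone_stabilizes_iff_noetherian.2 ‹_› ⟨iterateSpan U D α, iterateSpan_mono⟩
  refine ⟨n, ?_⟩
  have hstable : iterateSpan U D α n = iterateSpan U D α (n + 1) := hn (n + 1) n.le_succ
  simpa only [← hstable] using mapsTo_iterateSpan_succ (α := α) hDadd hDsmul hU n

end

theorem exists_stable_and_smallest_general
    {R M : Type*} [CommRing R] [AddCommGroup M] [Module R M]
    [IsNoetherian R M]
    (δ : R → R)
    (D : M → M)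
    (hDadd : ∀ m n : M, D (m + n) = D m + D n)
    (hDsmul : ∀ (r : R) (m : M), D (r • m) = δ r • m + r • D m)
    (U : Submodule R M) (hU : ∀ x ∈ U, D x ∈ U)
    (α : M)
    (N : ℕ → Submodule R M)
    (hN : ∀ n : ℕ, N n = U ⊔ Submodule.span R ((fun i => D^[i] α) '' Set.Iic n)) :
    (∃ n : ℕ, ∀ x ∈ N n, D x ∈ N n) ∧
    (∀ n : ℕ, (∀ x ∈ N n, D x ∈ N n) →
      (U ≤ N n ∧ α ∈ N n ∧
        ∀ N' : Submodule R M, U ≤ N' → α ∈ N' → (∀ x ∈ N', D x ∈ N') →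
          N n ≤ N')) := by
  obtain rfl : N = iterateSpan U D α := funext hN
  refine ⟨?_, fun n _ => ⟨le_sup_left, ?_, fun N' hUN' hαN' hDN' => ?_⟩⟩
  · exact exists_mapsTo_iterateSpan hDadd hDsmul hU
  · exact mem_sup_right (subset_span ⟨0, Nat.zero_le n, rfl⟩)
  · exact iterateSpan_le hUN' hαN' hDN' n

/-- Assume moreover that `M` is a Noetherian `R`-module.  With `N n` the join of a
`D`-stable submodule `U` with the span of `D^[0] α, …, D^[n] α`, there is an
`n` with `D(N n) ⊆ N n`, and for any such `n` the submodule `N n` is the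
smallest submodule of `M` containing `U` and `α` that is stable under `D`. -/
theorem exists_stable_and_smallest
    {R M : Type*} [CommRing R] [AddCommGroup M] [Module R M]
    [IsNoetherian R M]
    (δ : R → R)
    (hδadd : ∀ r s : R, δ (r + s) = δ r + δ s)
    (hδmul : ∀ r s : R, δ (r * s) = δ r * s + r * δ s)
    (D : M → M)
    (hDadd : ∀ m n : M, D (m + n) = D m + D n)
    (hDsmul : ∀ (r : R) (m : M), D (r • m) = δ r • m + r • D m)
    (U : Submodule R M) (hU : ∀ x ∈ U, D x ∈ U)
    (α : M)
    (N : ℕ → Submodule R M)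
    (hN : ∀ n : ℕ, N n = U ⊔ Submodule.span R ((fun i => D^[i] α) '' Set.Iic n)) :
    (∃ n : ℕ, ∀ x ∈ N n, D x ∈ N n) ∧
    (∀ n : ℕ, (∀ x ∈ N n, D x ∈ N n) →
      (U ≤ N n ∧ α ∈ N n ∧
        ∀ N' : Submodule R M, U ≤ N' → α ∈ N' → (∀ x ∈ N', D x ∈ N') →
          N n ≤ N')) :=
  exists_stable_and_smallest_general δ D hDadd hDsmul U hU α N hN
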